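/- arXiv:1706.09880 — 5 statements merged into one kernel-verified Lean document; each statement's English description precedes it below -/
import Mathlib

section
/- Let 0 < L ≤ U, let f ∈ F_{L,U} with unique minimizer x₀ (i.e., f(x₀) = min_x f(x)), and let α ∈ ℝ be a step size such that q(α) := max{|1 − U α|, |1 − L α|} < 1. Then, starting from an arbitrary initial guess x⁽⁰⁾ ∈ ℝⁿ, the gradient descent iterates x⁽ᵏ⁺¹⁾ = x⁽ᵏ⁾ − α ∇f(x⁽ᵏ⁾) satisfy ‖x⁽ᵏ⁾ − x₀‖ ≤ q(α)ᵏ ‖x⁽⁰⁾ − x₀‖ for every k ∈ ℕ. -/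
/-!
Gradient descent is the fixed-point iteration of `G y = y - α ∇f(y)`, and the minimizer `x₀` is a
fixed point of `G` since `∇f(x₀) = 0`. The derivative of `G` at `y` is the self-adjoint operator
`I - α ∇²f(y)`, whose Rayleigh quotients lie between `1 - Uα` and `1 - Lα`; hence its operator
norm is at most `q(α)`, and by the mean value inequality `G` is `q(α)`-Lipschitz.
-/

open InnerProductSpace

/-- `f ∈ F_{L,U}`: twice continuously differentiable, convex, and every eigenvalue of the
(symmetric) Hessian `∇²f(x)` lies in `[L, U]`, expressed via the quadratic form
`L ‖v‖² ≤ vᵀ ∇²f(x) v ≤ U ‖v‖²`. -/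
def MemFLU {n : ℕ} (L U : ℝ) (f : EuclideanSpace ℝ (Fin n) → ℝ) : Prop :=
  ContDiff ℝ 2 f ∧ ConvexOn ℝ Set.univ f ∧
    ∀ x v : EuclideanSpace ℝ (Fin n),
      L * ‖v‖ ^ 2 ≤ iteratedFDeriv ℝ 2 f x ![v, v] ∧
      iteratedFDeriv ℝ 2 f x ![v, v] ≤ U * ‖v‖ ^ 2

theorem abs_sub_mul_le_max_mul {L U α s t : ℝ} (hs : 0 ≤ s) (hLt : L * s ≤ t) (htU : t ≤ U * s) :
    |s - α * t| ≤ max |1 - U * α| |1 - L * α| * s := by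
  have h : |s - α * t| ≤ max |(1 - U * α) * s| |(1 - L * α) * s| := by
    rcases le_total 0 α with hα | hα
    · exact abs_le_max_abs_abs (by nlinarith) (by nlinarith)
    · rw [max_comm]
      exact abs_le_max_abs_abs (by nlinarith) (by nlinarith)
  rwa [abs_mul, abs_mul, abs_of_nonneg hs, ← max_mul_of_nonneg _ _ hs] at h

theorem norm_sub_le_pow_mul_of_forall_norm_sub_le {E : Type*} [SeminormedAddCommGroup E]
    {G : E → E} {x₀ : E} {q : ℝ} (hq : 0 ≤ q) (hG : ∀ y, ‖G y - x₀‖ ≤ q * ‖y - x₀‖)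
    {x : ℕ → E} (hx : ∀ k, x (k + 1) = G (x k)) (k : ℕ) :
    ‖x k - x₀‖ ≤ q ^ k * ‖x 0 - x₀‖ := by
  induction k with
  | zero => simp
  | succ k ih =>
    calc ‖x (k + 1) - x₀‖ ≤ q * ‖x k - x₀‖ := hx k ▸ hG (x k)
      _ ≤ q * (q ^ k * ‖x 0 - x₀‖) := mul_le_mul_of_nonneg_left ih hq
      _ = q ^ (k + 1) * ‖x 0 - x₀‖ := by ring

section

variable {E : Type*} [NormedAddCommGroup E] [InnerProductSpace ℝ E]

theorem ContinuousLinearMap.opNorm_le_of_abs_inner_le {T : E →L[ℝ] E}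
    (hT : (T : E →ₗ[ℝ] E).IsSymmetric) {q : ℝ} (hq : 0 ≤ q)
    (h : ∀ v, |⟪T v, v⟫_ℝ| ≤ q * ‖v‖ ^ 2) : ‖T‖ ≤ q := by
  rw [T.norm_eq_iSup_rayleighQuotient hT]
  refine ciSup_le fun v => ?_
  rw [rayleighQuotient, reApplyInnerSelf_apply, abs_div, abs_sq]
  exact div_le_of_le_mul₀ (sq_nonneg _) hq (h v)

variable [CompleteSpace E]

noncomputable def gradientStep (f : E → ℝ) (α : ℝ) (y : E) : E := y - α • gradient f y

theorem gradientStep_eq_self_of_isLocalMin {f : E → ℝ} {x₀ : E} (h : IsLocalMin f x₀) (α : ℝ) :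
    gradientStep f α x₀ = x₀ := by
  simp [gradientStep, gradient, h.fderiv_eq_zero]

theorem hasFDerivAt_gradientStep {f : E → ℝ} {y : E} {H : E →L[ℝ] E →L[ℝ] ℝ}
    (hH : HasFDerivAt (fderiv ℝ f) H y) (α : ℝ) :
    HasFDerivAt (gradientStep f α)
      (ContinuousLinearMap.id ℝ E - α • continuousLinearMapOfBilin H) y :=
  (hasFDerivAt_id y).sub
    (((toDual ℝ E).symm.toContinuousLinearEquiv.hasFDerivAt.comp y hH).const_smul α)

theorem norm_id_sub_smul_continuousLinearMapOfBilin_le {H : E →L[ℝ] E →L[ℝ] ℝ}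
    (hsymm : ∀ v w, H v w = H w v) {L U : ℝ}
    (hbounds : ∀ v, L * ‖v‖ ^ 2 ≤ H v v ∧ H v v ≤ U * ‖v‖ ^ 2) (α : ℝ) :
    ‖ContinuousLinearMap.id ℝ E - α • continuousLinearMapOfBilin H‖ ≤
      max |1 - U * α| |1 - L * α| := by
  have hinner : ∀ v w, ⟪(ContinuousLinearMap.id ℝ E - α • continuousLinearMapOfBilin H) v, w⟫_ℝ =
      ⟪v, w⟫_ℝ - α * H v w := fun v w => by
    simp only [sub_apply, ContinuousLinearMap.id_apply, smul_apply, inner_sub_left,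
      real_inner_smul_left, continuousLinearMapOfBilin_apply]
  refine ContinuousLinearMap.opNorm_le_of_abs_inner_le (fun v w => ?_)
    (le_max_of_le_left (abs_nonneg _)) (fun v => ?_)
  · rw [ContinuousLinearMap.coe_coe, real_inner_comm _ v, hinner, hinner, hsymm, real_inner_comm]
  · rw [hinner, real_inner_self_eq_norm_sq]
    exact abs_sub_mul_le_max_mul (sq_nonneg _) (hbounds v).1 (hbounds v).2

theorem norm_gradientStep_sub_le {f : E → ℝ} (hf : ContDiff ℝ 2 f) {L U : ℝ}
    (hH : ∀ x v, L * ‖v‖ ^ 2 ≤ iteratedFDeriv ℝ 2 f x ![v, v] ∧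
      iteratedFDeriv ℝ 2 f x ![v, v] ≤ U * ‖v‖ ^ 2) (α : ℝ) (y z : E) :
    ‖gradientStep f α y - gradientStep f α z‖ ≤ max |1 - U * α| |1 - L * α| * ‖y - z‖ := by
  have hdiff : Differentiable ℝ (fderiv ℝ f) :=
    (hf.fderiv_right (m := 1) (by norm_num)).differentiable (by norm_num)
  have hderiv y := hasFDerivAt_gradientStep (hdiff y).hasFDerivAt α
  have hnorm y : ‖ContinuousLinearMap.id ℝ E - α • continuousLinearMapOfBilin
      (fderiv ℝ (fderiv ℝ f) y)‖ ≤ max |1 - U * α| |1 - L * α| := by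
    refine norm_id_sub_smul_continuousLinearMapOfBilin_le
      (hf.contDiffAt.isSymmSndFDerivAt (by simp)) (fun v => ?_) α
    simpa only [iteratedFDeriv_two_apply, Matrix.cons_val_zero, Matrix.cons_val_one] using hH y v
  exact convex_univ.norm_image_sub_le_of_norm_hasFDerivWithin_le
    (fun x _ => (hderiv x).hasFDerivWithinAt) (fun x _ => hnorm x) (Set.mem_univ z)
    (Set.mem_univ y)

end

theorem gradient_descent_linear_rate_general {n : ℕ} (L U : ℝ)
    (f : EuclideanSpace ℝ (Fin n) → ℝ) (hf : MemFLU L U f)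
    (x₀ : EuclideanSpace ℝ (Fin n))
    (hmin : ∀ y, f x₀ ≤ f y)
    (α : ℝ)
    (x : ℕ → EuclideanSpace ℝ (Fin n))
    (hx : ∀ k, x (k + 1) = x k - α • gradient f (x k)) :
    ∀ k, ‖x k - x₀‖ ≤ (max |1 - U * α| |1 - L * α|) ^ k * ‖x 0 - x₀‖ := by
  obtain ⟨hC2, -, hHessian⟩ := hf
  have hfixed : gradientStep f α x₀ = x₀ :=
    gradientStep_eq_self_of_isLocalMin (.of_forall hmin) α
  refine norm_sub_le_pow_mul_of_forall_norm_sub_le (G := gradientStep f α) (le_max_of_le_left (abs_nonneg _))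
    (fun y => ?_) hx
  simpa only [hfixed] using norm_gradientStep_sub_le hC2 hHessian α y x₀

/-- For `f ∈ F_{L,U}` with unique minimizer `x₀` and a step size `α` with
`q(α) = max {|1 − Uα|, |1 − Lα|} < 1`, gradient descent `x⁽ᵏ⁺¹⁾ = x⁽ᵏ⁾ − α ∇f(x⁽ᵏ⁾)`
satisfies `‖x⁽ᵏ⁾ − x₀‖ ≤ q(α)ᵏ ‖x⁽⁰⁾ − x₀‖`. -/
theorem gradient_descent_linear_rate {n : ℕ} (L U : ℝ) (hL : 0 < L) (hLU : L ≤ U)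
    (f : EuclideanSpace ℝ (Fin n) → ℝ) (hf : MemFLU L U f)
    (x₀ : EuclideanSpace ℝ (Fin n))
    (hmin : ∀ y, f x₀ ≤ f y)
    (huniq : ∀ y, (∀ z, f y ≤ f z) → y = x₀)
    (α : ℝ) (hq : max |1 - U * α| |1 - L * α| < 1)
    (x : ℕ → EuclideanSpace ℝ (Fin n))
    (hx : ∀ k, x (k + 1) = x k - α • gradient f (x k)) :
    ∀ k, ‖x k - x₀‖ ≤ (max |1 - U * α| |1 - L * α|) ^ k * ‖x 0 - x₀‖ :=
  gradient_descent_linear_rate_general L U f hf x₀ hmin α x hx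
end

section
/- Let 0 < L < U with κ := U/L > 1, and let f : ℝⁿ → ℝ be the quadratic function f(x) = (1/2) xᵀ Q x + qᵀ x + c with Q ∈ ℝⁿˣⁿ symmetric positive definite whose eigenvalues all lie in [L, U], q ∈ ℝⁿ and c ∈ ℝ; let x₀ be the unique minimizer of f. Define the heavy-ball parameters α̃ := 4/(√U + √L)² and β̃ := ((√U − √L)/(√U + √L))². Starting from arbitrary x⁽⁻¹⁾, x⁽⁰⁾ ∈ ℝⁿ, define the heavy-ball iterates x⁽ᵏ⁾ = x⁽ᵏ⁻¹⁾ − α̃ ∇f(x⁽ᵏ⁻¹⁾) + β̃ (x⁽ᵏ⁻¹⁾ − x⁽ᵏ⁻²⁾) for k ≥ 1. Then for every k ≥ 1, ‖x⁽ᵏ⁾ − x₀‖ ≤ C(κ) · k · ((√κ − 1)/(√κ + 1))ᵏ · (‖x⁽⁰⁾ − x₀‖ + ‖x⁽⁻¹⁾ − x₀‖), where C(κ) := 4 (2 + 2β̃ + α̃) (√κ + 1)/(√κ − 1). -/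
/-!
With `e_k = x⁽ᵏ⁻¹⁾ - x₀` and `∇f(x) = Q (x - x₀)`, the errors obey the linear recurrence
`e_{k+2} = ((1 + β̃) - α̃ Q) e_{k+1} - β̃ e_k`. In an orthonormal eigenbasis of `Q` it splits into
scalar recurrences `s_{k+2} = t s_{k+1} - β̃ s_k` with `t = 1 + β̃ - α̃ μ`, and the choice of
`α̃, β̃` gives `t² ≤ 4 β̃` for every `μ ∈ [L, U]`. So the characteristic roots are complex
conjugates of modulus `ρ = √β̃ = (√κ - 1)/(√κ + 1)`, hence
`|s_{k+1}| ≤ (k + 1) ρᵏ (|s_0| + |s_1|)`, a bound that survives summation over the eigenbasis;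
finally `k + 1 ≤ C(κ) k`.
-/

open scoped Matrix RealInnerProductSpace

section LinearRecurrence

variable {𝕜 E : Type*} [NormedField 𝕜] [SeminormedAddCommGroup E] [NormedSpace 𝕜 E]
  {z w : 𝕜} {ρ : ℝ} {s : ℕ → E}

theorem norm_le_of_linearRecurrence (hz : ‖z‖ ≤ ρ) (hw : ‖w‖ ≤ ρ) (hρ : ρ ≤ 1)
    (hs : ∀ k, s (k + 2) = (z + w) • s (k + 1) - (z * w) • s k) (k : ℕ) :
    ‖s (k + 1)‖ ≤ (k + 1) * ρ ^ k * (‖s 0‖ + ‖s 1‖) := by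
  have hρ0 : 0 ≤ ρ := (norm_nonneg z).trans hz
  -- factor the recurrence: `d = (shift - w) s` satisfies `(shift - z) d = 0`
  set d : ℕ → E := fun k ↦ s (k + 1) - w • s k with hd_def
  have hd : ∀ k, d k = z ^ k • d 0 := by
    intro k
    induction k with
    | zero => simp
    | succ k ih =>
      have : d (k + 1) = z • d k := by simp only [hd_def, hs]; module
      rw [this, ih, smul_smul, pow_succ']
  have hd_norm : ∀ k, ‖d k‖ ≤ ρ ^ k * ‖d 0‖ := fun k ↦ by
    rw [hd k, norm_smul, norm_pow]
    gcongr
  have hs_norm : ∀ k : ℕ, ‖s (k + 1)‖ ≤ ρ ^ k * ‖s 1‖ + k * ρ ^ k * ‖d 0‖ := by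
    intro k
    induction k with
    | zero => simp
    | succ k ih =>
      calc ‖s (k + 2)‖ = ‖w • s (k + 1) + d (k + 1)‖ := by rw [add_sub_cancel]
        _ ≤ ρ * ‖s (k + 1)‖ + ρ ^ (k + 1) * ‖d 0‖ := by
          grw [norm_add_le, norm_smul, hw, hd_norm]
        _ ≤ ρ * (ρ ^ k * ‖s 1‖ + k * ρ ^ k * ‖d 0‖) + ρ ^ (k + 1) * ‖d 0‖ := by gcongr
        _ = ρ ^ (k + 1) * ‖s 1‖ + (k + 1 : ℕ) * ρ ^ (k + 1) * ‖d 0‖ := by push_cast; ring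
  have hd0 : ‖d 0‖ ≤ ‖s 0‖ + ‖s 1‖ :=
    calc ‖d 0‖ ≤ ‖s 1‖ + ‖w‖ * ‖s 0‖ := by grw [norm_sub_le, norm_smul]
      _ ≤ ‖s 0‖ + ‖s 1‖ := by nlinarith [norm_nonneg (s 0)]
  calc ‖s (k + 1)‖ ≤ ρ ^ k * ‖s 1‖ + k * ρ ^ k * (‖s 0‖ + ‖s 1‖) := by grw [hs_norm, hd0]
    _ ≤ (k + 1) * ρ ^ k * (‖s 0‖ + ‖s 1‖) := by
      have : 0 ≤ ρ ^ k * ‖s 0‖ := by positivity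
      nlinarith

end LinearRecurrence

open ComplexConjugate in
theorem abs_le_of_linearRecurrence_of_sq_le {t β : ℝ} {s : ℕ → ℝ} (hdisc : t ^ 2 ≤ 4 * β)
    (hβ : β ≤ 1) (hs : ∀ k, s (k + 2) = t * s (k + 1) - β * s k) (k : ℕ) :
    |s (k + 1)| ≤ (k + 1) * √β ^ k * (|s 0| + |s 1|) := by
  -- the characteristic roots are `z` and `conj z`, both of modulus `√β`
  set z : ℂ := ⟨t / 2, √(β - t ^ 2 / 4)⟩
  have hz_normSq : Complex.normSq z = β := by
    rw [Complex.normSq_mk, Real.mul_self_sqrt (by linarith)]; ring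
  have hz : ‖z‖ = √β := by rw [Complex.norm_def, hz_normSq]
  have hrec : ∀ k, (s (k + 2) : ℂ) =
      (z + conj z) • (s (k + 1) : ℂ) - (z * conj z) • (s k : ℂ) := by
    intro k
    rw [Complex.add_conj, Complex.mul_conj, hz_normSq, hs k, show z.re = t / 2 from rfl]
    push_cast; ring
  simpa [Complex.norm_real] using norm_le_of_linearRecurrence (s := fun k ↦ (s k : ℂ))
    hz.le ((Complex.norm_conj z).trans hz).le (Real.sqrt_le_one.mpr hβ) hrec k

theorem EuclideanSpace.norm_le_of_forall_abs_le {ι : Type*} [Fintype ι]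
    {u v w : EuclideanSpace ℝ ι} {c : ℝ} (hc : 0 ≤ c)
    (h : ∀ i, |u i| ≤ c * (|v i| + |w i|)) : ‖u‖ ≤ c * (‖v‖ + ‖w‖) := by
  let absV : EuclideanSpace ℝ ι := WithLp.toLp 2 fun i ↦ |v i|
  let absW : EuclideanSpace ℝ ι := WithLp.toLp 2 fun i ↦ |w i|
  calc ‖u‖ ≤ ‖c • (absV + absW)‖ := by
        simp only [EuclideanSpace.norm_eq]
        gcongr with i
        rw [show (c • (absV + absW)) i = c * (|v i| + |w i|) from rfl]
        exact (h i).trans (le_abs_self _)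
    _ ≤ c * (‖absV‖ + ‖absW‖) := by grw [norm_smul, Real.norm_of_nonneg hc, norm_add_le]
    _ = c * (‖v‖ + ‖w‖) := by simp [absV, absW, EuclideanSpace.norm_eq]

theorem OrthonormalBasis.norm_le_of_forall_abs_inner_le {ι E : Type*} [Fintype ι]
    [NormedAddCommGroup E] [InnerProductSpace ℝ E] (b : OrthonormalBasis ι ℝ E)
    {u v w : E} {c : ℝ} (hc : 0 ≤ c)
    (h : ∀ i, |⟪b i, u⟫| ≤ c * (|⟪b i, v⟫| + |⟪b i, w⟫|)) : ‖u‖ ≤ c * (‖v‖ + ‖w‖) := by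
  simp only [← b.repr_apply_apply] at h
  simpa only [b.repr.norm_map] using EuclideanSpace.norm_le_of_forall_abs_le hc h

section Quadratic

variable {F : Type*} [NormedAddCommGroup F] [InnerProductSpace ℝ F] [CompleteSpace F]
  {T : F →L[ℝ] F}

theorem LinearMap.IsSymmetric.hasGradientAt_quadratic (hT : (T : F →ₗ[ℝ] F).IsSymmetric)
    (q : F) (c : ℝ) (x : F) :
    HasGradientAt (fun y ↦ 1 / 2 * ⟪T y, y⟫ + ⟪q, y⟫ + c) (T x + q) x := by
  have h := (((hT.hasStrictFDerivAt_reApplyInnerSelf x).hasFDerivAt.const_mul (1 / 2)).add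
    (innerSL ℝ q).hasFDerivAt).add_const c
  have hD : (1 / 2 : ℝ) • (2 • innerSL ℝ (T x)) + innerSL ℝ q = innerSL ℝ (T x + q) := by
    ext y; simp
  rw [hD] at h
  exact h.congr_of_eventuallyEq
    (.of_forall fun y ↦ by simp [ContinuousLinearMap.reApplyInnerSelf_apply])

theorem LinearMap.IsSymmetric.gradient_quadratic_eq_apply_sub
    (hT : (T : F →ₗ[ℝ] F).IsSymmetric) {q : F} {c : ℝ} {f : F → ℝ}
    (hf : ∀ y, f y = 1 / 2 * ⟪T y, y⟫ + ⟪q, y⟫ + c) {x₀ : F} (hmin : ∀ y, f x₀ ≤ f y)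
    (x : F) : gradient f x = T (x - x₀) := by
  obtain rfl : f = _ := funext hf
  have hcrit : T x₀ + q = 0 := by
    apply (InnerProductSpace.toDual ℝ F).injective
    simpa using IsLocalMin.hasFDerivAt_eq_zero (.of_forall hmin)
      (hT.hasGradientAt_quadratic q c x₀).hasFDerivAt
  rw [(hT.hasGradientAt_quadratic q c x).gradient, map_sub, eq_neg_of_add_eq_zero_left hcrit]
  abel

end Quadratic

theorem Matrix.IsHermitian.gradient_eq_toEuclideanCLM_sub {ι : Type*} [Fintype ι]
    [DecidableEq ι] {Q : Matrix ι ι ℝ} (hQ : Q.IsHermitian) {q : EuclideanSpace ℝ ι} {c : ℝ}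
    {f : EuclideanSpace ℝ ι → ℝ}
    (hf : ∀ x, f x = 1 / 2 * (x.ofLp ⬝ᵥ Q *ᵥ x.ofLp) + q.ofLp ⬝ᵥ x.ofLp + c)
    {x₀ : EuclideanSpace ℝ ι} (hmin : ∀ y, f x₀ ≤ f y) (x : EuclideanSpace ℝ ι) :
    gradient f x = Matrix.toEuclideanCLM (𝕜 := ℝ) Q (x - x₀) := by
  refine LinearMap.IsSymmetric.gradient_quadratic_eq_apply_sub (q := q) (c := c)
    (Matrix.isSymmetric_toEuclideanLin_iff.mpr hQ) (fun y ↦ ?_) hmin x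
  rw [hf, real_inner_comm, Matrix.inner_toEuclideanCLM, EuclideanSpace.inner_eq_star_dotProduct]
  simp [dotProduct_comm]

theorem norm_le_of_heavyBall_recurrence {ι E : Type*} [Fintype ι] [NormedAddCommGroup E]
    [InnerProductSpace ℝ E] {T : E →ₗ[ℝ] E} (hT : T.IsSymmetric) (b : OrthonormalBasis ι ℝ E)
    {μ : ι → ℝ} (hb : ∀ i, T (b i) = μ i • b i) {α β : ℝ}
    (hdisc : ∀ i, (1 + β - α * μ i) ^ 2 ≤ 4 * β) (hβ : β ≤ 1) {e : ℕ → E}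
    (he : ∀ k, e (k + 2) = (1 + β) • e (k + 1) - α • T (e (k + 1)) - β • e k) (k : ℕ) :
    ‖e (k + 1)‖ ≤ (k + 1) * √β ^ k * (‖e 0‖ + ‖e 1‖) := by
  have hcoord : ∀ i k, ⟪b i, e (k + 2)⟫ =
      (1 + β - α * μ i) * ⟪b i, e (k + 1)⟫ - β * ⟪b i, e k⟫ := fun i k ↦ by
    rw [he, inner_sub_right, inner_sub_right, inner_smul_right, inner_smul_right,
      inner_smul_right, ← hT, hb, real_inner_smul_left]
    ring
  exact b.norm_le_of_forall_abs_inner_le (by positivity) fun i ↦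
    abs_le_of_linearRecurrence_of_sq_le (s := fun k ↦ ⟪b i, e k⟫) (hdisc i) hβ (hcoord i) k

section HeavyBallParameters

variable {L U : ℝ}

theorem heavyBall_discriminant_le {μ : ℝ} (hL : 0 ≤ L) (hU : 0 < U) (hμ : μ ∈ Set.Icc L U) :
    (1 + ((√U - √L) / (√U + √L)) ^ 2 - 4 / (√U + √L) ^ 2 * μ) ^ 2 ≤
      4 * ((√U - √L) / (√U + √L)) ^ 2 := by
  have hsL := Real.sq_sqrt hL
  have hsU := Real.sq_sqrt hU.le
  have hs : 0 < √U + √L := by positivity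
  have hlhs : 1 + ((√U - √L) / (√U + √L)) ^ 2 - 4 / (√U + √L) ^ 2 * μ =
      (2 * U + 2 * L - 4 * μ) / (√U + √L) ^ 2 := by
    field_simp; linear_combination 2 * hsU + 2 * hsL
  have hrhs : 4 * ((√U - √L) / (√U + √L)) ^ 2 = 4 * (U - L) ^ 2 / ((√U + √L) ^ 2) ^ 2 := by
    rw [← (by linear_combination hsU - hsL : (√U - √L) * (√U + √L) = U - L)]
    field_simp
  rw [hlhs, hrhs, div_pow]
  gcongr
  nlinarith [hμ.1, hμ.2]

theorem sqrt_heavyBall_momentum {κ : ℝ} (hL : 0 < L) (hLU : L ≤ U) (hκ : κ = U / L) :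
    √(((√U - √L) / (√U + √L)) ^ 2) = (√κ - 1) / (√κ + 1) := by
  have hsL : 0 < √L := Real.sqrt_pos.mpr hL
  rw [Real.sqrt_sq (div_nonneg (by linarith [Real.sqrt_le_sqrt hLU]) (by positivity)), hκ,
    Real.sqrt_div' _ hL.le]
  field_simp

end HeavyBallParameters

theorem natCast_add_one_le_heavyBall_constant_mul {α β s : ℝ} (hα : 0 ≤ α) (hβ : 0 ≤ β)
    (hs : 1 < s) {k : ℕ} (hk : 1 ≤ k) :
    (k + 1 : ℝ) ≤ 4 * (2 + 2 * β + α) * (s + 1) / (s - 1) * k := by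
  have hr : 1 ≤ (s + 1) / (s - 1) := by rw [one_le_div (by linarith)]; linarith
  have h8 : 8 ≤ 4 * (2 + 2 * β + α) * ((s + 1) / (s - 1)) := by nlinarith
  have : (1 : ℝ) ≤ k := by exact_mod_cast hk
  rw [mul_div_assoc]
  nlinarith

theorem heavyBall_convergence_general {n : ℕ} (L U : ℝ) (hL : 0 < L) (hLU : L < U)
    (κ : ℝ) (hκ : κ = U / L)
    (Q : Matrix (Fin n) (Fin n) ℝ) (hQpd : Q.PosDef)
    (hQspec : ∀ μ ∈ spectrum ℝ Q, μ ∈ Set.Icc L U)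
    (q : EuclideanSpace ℝ (Fin n)) (c : ℝ)
    (f : EuclideanSpace ℝ (Fin n) → ℝ)
    (hf : ∀ x, f x = (1 / 2) * ((fun i => x i) ⬝ᵥ Q.mulVec fun i => x i) +
        ((fun i => q i) ⬝ᵥ fun i => x i) + c)
    (x₀ : EuclideanSpace ℝ (Fin n))
    (hmin : ∀ y, f x₀ ≤ f y)
    (αt βt : ℝ)
    (hαt : αt = 4 / (Real.sqrt U + Real.sqrt L) ^ 2)
    (hβt : βt = ((Real.sqrt U - Real.sqrt L) / (Real.sqrt U + Real.sqrt L)) ^ 2)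
    (xm1 : EuclideanSpace ℝ (Fin n))  -- the iterate x⁽⁻¹⁾
    (x : ℕ → EuclideanSpace ℝ (Fin n))
    (hx1 : x 1 = x 0 - αt • gradient f (x 0) + βt • (x 0 - xm1))
    (hxk : ∀ k, 2 ≤ k →
      x k = x (k - 1) - αt • gradient f (x (k - 1)) + βt • (x (k - 1) - x (k - 2))) :
    ∀ k, 1 ≤ k →
      ‖x k - x₀‖ ≤
        (4 * (2 + 2 * βt + αt) * (Real.sqrt κ + 1) / (Real.sqrt κ - 1)) * k *
            ((Real.sqrt κ - 1) / (Real.sqrt κ + 1)) ^ k *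
          (‖x 0 - x₀‖ + ‖xm1 - x₀‖) := by
  intro k hk
  have hQ := hQpd.isHermitian
  set T := Matrix.toEuclideanCLM (𝕜 := ℝ) Q
  have hgrad := hQ.gradient_eq_toEuclideanCLM_sub hf hmin
  let e : ℕ → EuclideanSpace ℝ (Fin n) := fun | 0 => xm1 - x₀ | k + 1 => x k - x₀
  have he : ∀ k, e (k + 2) = (1 + βt) • e (k + 1) - αt • T (e (k + 1)) - βt • e k
    | 0 => by simp only [e, hx1, hgrad]; module
    | k + 1 => by
      simp only [e, hxk (k + 2) (by omega), hgrad, Nat.add_one_sub_one, add_tsub_cancel_right]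
      module
  have hdisc : ∀ i, (1 + βt - αt * hQ.eigenvalues i) ^ 2 ≤ 4 * βt := fun i ↦ hαt ▸ hβt ▸
    heavyBall_discriminant_le hL.le (hL.trans hLU) (hQspec _ (hQ.eigenvalues_mem_spectrum_real i))
  have hκ1 : 1 < √κ := by rw [hκ, Real.lt_sqrt zero_le_one, one_pow, one_lt_div hL]; exact hLU
  have hρ : √βt = (√κ - 1) / (√κ + 1) := hβt ▸ sqrt_heavyBall_momentum hL hLU.le hκ
  have hβ1 : βt ≤ 1 := by rw [← Real.sqrt_le_one, hρ, div_le_one (by linarith)]; linarith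
  calc ‖x k - x₀‖ ≤ (k + 1) * √βt ^ k * (‖x 0 - x₀‖ + ‖xm1 - x₀‖) := by
        rw [add_comm ‖x 0 - x₀‖]
        exact norm_le_of_heavyBall_recurrence (Matrix.isSymmetric_toEuclideanLin_iff.mpr hQ)
          hQ.eigenvectorBasis
          (fun i ↦ WithLp.ofLp_injective 2 (hQ.mulVec_eigenvectorBasis i)) hdisc hβ1 he k
    _ ≤ _ := by
      rw [hρ]
      gcongr
      exact natCast_add_one_le_heavyBall_constant_mul (hαt ▸ by positivity)
        (hβt ▸ sq_nonneg _) hκ1 hk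

/-- heavy-ball convergence for a positive definite quadratic
`f(x) = ½ xᵀ Q x + qᵀ x + c` whose eigenvalues lie in `[L, U]`, `0 < L < U`,
`κ = U/L`. With `α̃ = 4/(√U+√L)²`, `β̃ = ((√U−√L)/(√U+√L))²`, the heavy-ball
iterates `x⁽ᵏ⁾ = x⁽ᵏ⁻¹⁾ − α̃∇f(x⁽ᵏ⁻¹⁾) + β̃(x⁽ᵏ⁻¹⁾ − x⁽ᵏ⁻²⁾)` (started from
arbitrary `x⁽⁻¹⁾, x⁽⁰⁾`) satisfy, for every `k ≥ 1`,
`‖x⁽ᵏ⁾ − x₀‖ ≤ C(κ) k ((√κ−1)/(√κ+1))ᵏ (‖x⁽⁰⁾ − x₀‖ + ‖x⁽⁻¹⁾ − x₀‖)`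
with `C(κ) = 4 (2 + 2β̃ + α̃) (√κ+1)/(√κ−1)`. -/
theorem heavyBall_convergence {n : ℕ} (L U : ℝ) (hL : 0 < L) (hLU : L < U)
    (κ : ℝ) (hκ : κ = U / L)
    (Q : Matrix (Fin n) (Fin n) ℝ) (hQpd : Q.PosDef)
    (hQspec : ∀ μ ∈ spectrum ℝ Q, μ ∈ Set.Icc L U)
    (q : EuclideanSpace ℝ (Fin n)) (c : ℝ)
    (f : EuclideanSpace ℝ (Fin n) → ℝ)
    (hf : ∀ x, f x = (1 / 2) * ((fun i => x i) ⬝ᵥ Q.mulVec fun i => x i) +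
        ((fun i => q i) ⬝ᵥ fun i => x i) + c)
    (x₀ : EuclideanSpace ℝ (Fin n))
    (hmin : ∀ y, f x₀ ≤ f y) (huniq : ∀ y, (∀ z, f y ≤ f z) → y = x₀)
    (αt βt : ℝ)
    (hαt : αt = 4 / (Real.sqrt U + Real.sqrt L) ^ 2)
    (hβt : βt = ((Real.sqrt U - Real.sqrt L) / (Real.sqrt U + Real.sqrt L)) ^ 2)
    (xm1 : EuclideanSpace ℝ (Fin n))  -- the iterate x⁽⁻¹⁾
    (x : ℕ → EuclideanSpace ℝ (Fin n))
    (hx1 : x 1 = x 0 - αt • gradient f (x 0) + βt • (x 0 - xm1))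
    (hxk : ∀ k, 2 ≤ k →
      x k = x (k - 1) - αt • gradient f (x (k - 1)) + βt • (x (k - 1) - x (k - 2))) :
    ∀ k, 1 ≤ k →
      ‖x k - x₀‖ ≤
        (4 * (2 + 2 * βt + αt) * (Real.sqrt κ + 1) / (Real.sqrt κ - 1)) * k *
            ((Real.sqrt κ - 1) / (Real.sqrt κ + 1)) ^ k *
          (‖x 0 - x₀‖ + ‖xm1 - x₀‖) :=
  heavyBall_convergence_general L U hL hLU κ hκ Q hQpd hQspec q c f hf x₀ hmin αt βt hαt hβt xm1 x
    hx1 hxk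
end

section
/- Let a, b ∈ ℝ and M = [[a, b], [1, 0]] ∈ ℝ²ˣ², with spectral radius ρ(M) (the maximum modulus of the eigenvalues of M). Then for every k ∈ ℕ with k ≥ 1 there exist a unitary matrix V ∈ ℂ²ˣ², complex numbers λ₁, λ₂ with |λ₁| ≤ ρ(M) and |λ₂| ≤ ρ(M), and a complex number d with |d| ≤ k (|a| + |b| + 1) ρ(M)^{k−1}, such that Mᵏ = V [[λ₁ᵏ, d], [0, λ₂ᵏ]] Vᴴ, where Vᴴ denotes the conjugate transpose of V. -/
/-!
Since ℂ is algebraically closed, the companion matrix `A` has a unit eigenvector `(p, q)`, and the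
unitary `V` with columns `(p, q)` and `(-q̄, p̄)` puts it in upper triangular (Schur) form
`Vᴴ A V = [[l, c], [0, m]]`. The diagonal entries `l, m` are eigenvalues of `A`, hence of modulus
at most `ρ`. Conjugation by a unitary preserves the sum of the squared moduli of the entries
(it is the trace of `Aᴴ A`), so `|c|² ≤ a² + b² + 1 ≤ (|a| + |b| + 1)²`. The corner entry of
the `k`-th power of the triangular factor is `c ∑_{i<k} lⁱ m^(k-1-i)`, a sum of `k` terms of
modulus at most `ρ^(k-1)`.
-/

open scoped Matrix ComplexConjugate
open Finset

theorem norm_geom_sum₂_le {R : Type*} [NormedRing R] [NormOneClass R] {x y : R} {ρ : ℝ}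
    (hx : ‖x‖ ≤ ρ) (hy : ‖y‖ ≤ ρ) (k : ℕ) :
    ‖∑ i ∈ range k, x ^ i * y ^ (k - 1 - i)‖ ≤ k * ρ ^ (k - 1) := by
  have hρ : 0 ≤ ρ := (norm_nonneg x).trans hx
  have hterm : ∀ i ∈ range k, ‖x ^ i * y ^ (k - 1 - i)‖ ≤ ρ ^ (k - 1) := by
    intro i hi
    calc ‖x ^ i * y ^ (k - 1 - i)‖ ≤ ‖x‖ ^ i * ‖y‖ ^ (k - 1 - i) :=
          (norm_mul_le _ _).trans (mul_le_mul (norm_pow_le _ _) (norm_pow_le _ _)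
            (norm_nonneg _) (by positivity))
      _ ≤ ρ ^ i * ρ ^ (k - 1 - i) := by gcongr
      _ = ρ ^ (k - 1) := by rw [← pow_add, Nat.add_sub_cancel' (by simp at hi; omega)]
  calc ‖∑ i ∈ range k, x ^ i * y ^ (k - 1 - i)‖ ≤ ∑ i ∈ range k, ‖x ^ i * y ^ (k - 1 - i)‖ :=
        norm_sum_le _ _
    _ ≤ #(range k) • ρ ^ (k - 1) := sum_le_card_nsmul _ _ _ hterm
    _ = k * ρ ^ (k - 1) := by simp

namespace Matrix

theorem IsUpperTriangular.diag_mem_spectrum {n K : Type*} [Fintype n] [LinearOrder n] [Field K]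
    {T : Matrix n n K} (hT : T.IsUpperTriangular) (i : n) : T i i ∈ spectrum K T := by
  refine mem_spectrum_of_isRoot_charpoly ?_
  rw [charpoly_of_isUpperTriangular T hT, Polynomial.IsRoot, Polynomial.eval_prod]
  exact prod_eq_zero (mem_univ i) (by simp)

section UnitaryConjugation

variable {n 𝕜 : Type*} [Fintype n] [RCLike 𝕜]

theorem trace_conjTranspose_mul_self_eq_sum_norm_sq (A : Matrix n n 𝕜) :
    (Aᴴ * A).trace = ((∑ i, ∑ j, ‖A i j‖ ^ 2 : ℝ) : 𝕜) := by
  simp only [trace, diag, mul_apply, conjTranspose_apply, RCLike.star_def, RCLike.conj_mul]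
  rw [sum_comm]
  push_cast
  rfl

variable [DecidableEq n] {V : Matrix n n 𝕜}

theorem spectrum_conjTranspose_mul_mul_of_mem_unitaryGroup (A : Matrix n n 𝕜)
    (hV : V ∈ unitaryGroup n 𝕜) : spectrum 𝕜 (Vᴴ * A * V) = spectrum 𝕜 A :=
  spectrum.units_conjugate' (u := Unitary.toUnits ⟨V, hV⟩)

theorem pow_eq_mul_conjTranspose_mul_mul_pow_mul_conjTranspose (A : Matrix n n 𝕜)
    (hV : V ∈ unitaryGroup n 𝕜) (k : ℕ) : A ^ k = V * (Vᴴ * A * V) ^ k * Vᴴ := by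
  have hVV : V * Vᴴ = 1 := mem_unitaryGroup_iff.mp hV
  have hconj : (Vᴴ * A * V) ^ k = Vᴴ * A ^ k * V :=
    Units.conj_pow' (Unitary.toUnits ⟨V, hV⟩) A k
  rw [hconj, ← Matrix.mul_assoc, ← Matrix.mul_assoc, hVV, Matrix.one_mul, Matrix.mul_assoc, hVV,
    Matrix.mul_one]

theorem sum_norm_sq_conjTranspose_mul_mul_of_mem_unitaryGroup (A : Matrix n n 𝕜)
    (hV : V ∈ unitaryGroup n 𝕜) :
    ∑ i, ∑ j, ‖(Vᴴ * A * V) i j‖ ^ 2 = ∑ i, ∑ j, ‖A i j‖ ^ 2 := by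
  have hVV : V * Vᴴ = 1 := mem_unitaryGroup_iff.mp hV
  have hgram : (Vᴴ * A * V)ᴴ * (Vᴴ * A * V) = Vᴴ * (Aᴴ * A) * V := by
    simp only [conjTranspose_mul, conjTranspose_conjTranspose, Matrix.mul_assoc]
    rw [← Matrix.mul_assoc V, hVV, Matrix.one_mul]
  have htrace : ((Vᴴ * A * V)ᴴ * (Vᴴ * A * V)).trace = (Aᴴ * A).trace := by
    rw [hgram, trace_mul_cycle, hVV, Matrix.one_mul]
  rw [trace_conjTranspose_mul_self_eq_sum_norm_sq, trace_conjTranspose_mul_self_eq_sum_norm_sq]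
    at htrace
  exact_mod_cast htrace

theorem norm_conjTranspose_mul_mul_apply_le (A : Matrix n n 𝕜) (hV : V ∈ unitaryGroup n 𝕜)
    (i j : n) : ‖(Vᴴ * A * V) i j‖ ≤ ∑ i, ∑ j, ‖A i j‖ := by
  have hnonneg : ∀ i j, 0 ≤ ‖A i j‖ := fun _ _ => norm_nonneg _
  refine (pow_le_pow_iff_left₀ (norm_nonneg _) (by positivity) two_ne_zero).mp ?_
  calc ‖(Vᴴ * A * V) i j‖ ^ 2 ≤ ∑ i, ∑ j, ‖(Vᴴ * A * V) i j‖ ^ 2 :=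
        (single_le_sum (f := fun j => ‖(Vᴴ * A * V) i j‖ ^ 2) (fun _ _ => by positivity)
          (mem_univ j)).trans
        (single_le_sum (f := fun i => ∑ j, ‖(Vᴴ * A * V) i j‖ ^ 2)
          (fun _ _ => by positivity) (mem_univ i))
    _ = ∑ i, ∑ j, ‖A i j‖ ^ 2 := sum_norm_sq_conjTranspose_mul_mul_of_mem_unitaryGroup A hV
    _ ≤ ∑ i, (∑ j, ‖A i j‖) ^ 2 :=
        sum_le_sum fun i _ => sum_sq_le_sq_sum_of_nonneg fun j _ => hnonneg i j
    _ ≤ (∑ i, ∑ j, ‖A i j‖) ^ 2 :=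
        sum_sq_le_sq_sum_of_nonneg fun i _ => sum_nonneg fun j _ => hnonneg i j

end UnitaryConjugation

theorem isUpperTriangular_fin_two {R : Type*} [Zero R] (l c m : R) :
    (!![l, c; 0, m]).IsUpperTriangular := by
  intro i j hij
  fin_cases i <;> fin_cases j <;> simp_all

theorem fin_two_upperTriangular_pow {R : Type*} [CommRing R] (l c m : R) (k : ℕ) :
    !![l, c; 0, m] ^ k = !![l ^ k, (∑ i ∈ range k, l ^ i * m ^ (k - 1 - i)) * c; 0, m ^ k] := by
  induction k with
  | zero => simp [one_fin_two]
  | succ k ih =>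
    simp only [pow_succ, ih, Nat.add_sub_cancel, geom_sum₂_succ_eq, mul_fin_two]
    ring_nf

theorem fin_two_mem_unitaryGroup {p q : ℂ} (h : ‖p‖ ^ 2 + ‖q‖ ^ 2 = 1) :
    !![p, -conj q; q, conj p] ∈ unitaryGroup (Fin 2) ℂ := by
  have h' : conj p * p + conj q * q = 1 := by
    rw [Complex.conj_mul', Complex.conj_mul']
    exact_mod_cast h
  rw [mem_unitaryGroup_iff', star_eq_conjTranspose]
  ext i j
  fin_cases i <;> fin_cases j <;> simp [mul_apply, Fin.sum_univ_two]
  · exact h'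
  · ring
  · ring
  · linear_combination h'

theorem conjTranspose_mul_mul_apply_one_zero_of_mulVec_eq_smul {A : Matrix (Fin 2) (Fin 2) ℂ}
    {p q μ : ℂ} (h : A *ᵥ ![p, q] = μ • ![p, q]) :
    (!![p, -conj q; q, conj p]ᴴ * A * !![p, -conj q; q, conj p]) 1 0 = 0 := by
  have h0 := congrFun h 0
  have h1 := congrFun h 1
  simp only [mulVec, dotProduct, Fin.isValue, Fin.sum_univ_two, cons_val_zero, cons_val_one,
    cons_val_fin_one, Pi.smul_apply, smul_eq_mul] at h0 h1
  simp only [Fin.isValue, mul_apply, conjTranspose_apply, of_apply, cons_val', cons_val_one,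
    cons_val_fin_one, RCLike.star_def, Fin.sum_univ_two, cons_val_zero, map_neg,
    Complex.conj_conj, neg_mul]
  linear_combination (-q) * h0 + p * h1

theorem exists_unit_eigenvector_fin_two (A : Matrix (Fin 2) (Fin 2) ℂ) :
    ∃ μ p q : ℂ, ‖p‖ ^ 2 + ‖q‖ ^ 2 = 1 ∧ A *ᵥ ![p, q] = μ • ![p, q] := by
  obtain ⟨μ, hμ⟩ := Module.End.exists_eigenvalue (toLin' A)
  obtain ⟨v, hv⟩ := hμ.exists_hasEigenvector
  have hpos : 0 < ‖v 0‖ ^ 2 + ‖v 1‖ ^ 2 := by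
    obtain ⟨i, hi⟩ := Function.ne_iff.mp hv.2
    have := norm_pos_iff.mpr hi
    fin_cases i <;> positivity
  set r := √(‖v 0‖ ^ 2 + ‖v 1‖ ^ 2)
  refine ⟨μ, v 0 / r, v 1 / r, ?_, ?_⟩
  · simp only [norm_div, Complex.norm_real, Real.norm_eq_abs, div_pow, sq_abs]
    rw [← add_div, Real.sq_sqrt hpos.le, div_self hpos.ne']
  · have hv' : A *ᵥ v = μ • v := hv.apply_eq_smul
    have hscale : ![v 0 / r, v 1 / r] = (r⁻¹ : ℂ) • v := by
      ext i
      fin_cases i <;> simp [div_eq_inv_mul]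
    rw [hscale, mulVec_smul, hv', smul_comm]

theorem exists_unitary_conjTranspose_mul_mul_eq_upperTriangular (A : Matrix (Fin 2) (Fin 2) ℂ) :
    ∃ V ∈ unitaryGroup (Fin 2) ℂ, ∃ l c m : ℂ, Vᴴ * A * V = !![l, c; 0, m] := by
  obtain ⟨μ, p, q, hunit, heigen⟩ := exists_unit_eigenvector_fin_two A
  have hT := eta_fin_two (!![p, -conj q; q, conj p]ᴴ * A * !![p, -conj q; q, conj p])
  rw [conjTranspose_mul_mul_apply_one_zero_of_mulVec_eq_smul heigen] at hT
  exact ⟨_, fin_two_mem_unitaryGroup hunit, _, _, _, hT⟩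

end Matrix

open Matrix

theorem power_of_companion_schur_general (a b : ℝ)
    (M : Matrix (Fin 2) (Fin 2) ℝ) (hM : M = !![a, b; 1, 0])
    (ρ : ℝ)
    (hρ : IsGreatest ((fun z : ℂ => ‖z‖) '' spectrum ℂ (M.map (Complex.ofReal : ℝ → ℂ))) ρ)
    (k : ℕ) :
    ∃ (V : Matrix (Fin 2) (Fin 2) ℂ) (l1 l2 d : ℂ),
      Vᴴ * V = 1 ∧
      ‖l1‖ ≤ ρ ∧ ‖l2‖ ≤ ρ ∧
      ‖d‖ ≤ (k : ℝ) * (|a| + |b| + 1) * ρ ^ (k - 1) ∧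
      (M.map (Complex.ofReal : ℝ → ℂ)) ^ k = V * !![l1 ^ k, d; 0, l2 ^ k] * Vᴴ := by
  set A := M.map (Complex.ofReal : ℝ → ℂ)
  obtain ⟨V, hV, l, c, m, hT⟩ := exists_unitary_conjTranspose_mul_mul_eq_upperTriangular A
  have hspec : spectrum ℂ !![l, c; 0, m] = spectrum ℂ A :=
    hT ▸ spectrum_conjTranspose_mul_mul_of_mem_unitaryGroup A hV
  have hl : ‖l‖ ≤ ρ :=
    hρ.2 ⟨l, hspec ▸ (isUpperTriangular_fin_two l c m).diag_mem_spectrum 0, rfl⟩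
  have hm : ‖m‖ ≤ ρ :=
    hρ.2 ⟨m, hspec ▸ (isUpperTriangular_fin_two l c m).diag_mem_spectrum 1, rfl⟩
  have hc : ‖c‖ ≤ |a| + |b| + 1 := by
    have hentry := norm_conjTranspose_mul_mul_apply_le A hV 0 1
    rw [hT] at hentry
    simpa [A, hM, Fin.sum_univ_two] using hentry
  refine ⟨V, l, m, (∑ i ∈ range k, l ^ i * m ^ (k - 1 - i)) * c, mem_unitaryGroup_iff'.mp hV,
    hl, hm, ?_, ?_⟩
  · have hρ0 : 0 ≤ ρ := (norm_nonneg l).trans hl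
    rw [norm_mul, mul_right_comm]
    exact mul_le_mul (norm_geom_sum₂_le hl hm k) hc (norm_nonneg c) (by positivity)
  · rw [pow_eq_mul_conjTranspose_mul_mul_pow_mul_conjTranspose A hV, hT,
      fin_two_upperTriangular_pow]

/-- For `M = [[a, b], [1, 0]]` with spectral radius `ρ(M)` (the largest
modulus of its complex eigenvalues), and any `k ≥ 1`, there is a unitary `V ∈ ℂ²ˣ²`
such that `Mᵏ = V [[λ₁ᵏ, d], [0, λ₂ᵏ]] Vᴴ` with `|λ₁|, |λ₂| ≤ ρ(M)` and
`|d| ≤ k (|a| + |b| + 1) ρ(M)^(k−1)`. -/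
theorem power_of_companion_schur (a b : ℝ)
    (M : Matrix (Fin 2) (Fin 2) ℝ) (hM : M = !![a, b; 1, 0])
    (ρ : ℝ)
    (hρ : IsGreatest ((fun z : ℂ => ‖z‖) '' spectrum ℂ (M.map (Complex.ofReal : ℝ → ℂ))) ρ)
    (k : ℕ) (hk : 1 ≤ k) :
    ∃ (V : Matrix (Fin 2) (Fin 2) ℂ) (l1 l2 d : ℂ),
      Vᴴ * V = 1 ∧
      ‖l1‖ ≤ ρ ∧ ‖l2‖ ≤ ρ ∧
      ‖d‖ ≤ (k : ℝ) * (|a| + |b| + 1) * ρ ^ (k - 1) ∧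
      (M.map (Complex.ofReal : ℝ → ℂ)) ^ k = V * !![l1 ^ k, d; 0, l2 ^ k] * Vᴴ :=
  power_of_companion_schur_general a b M hM ρ hρ k
end

section
/- Let 0 < L ≤ U and define α̃ := 4/(√U + √L)² and β̃ := ((√U − √L)/(√U + √L))². Then for every real λ ∈ [L, U], the matrix B := [[1 + β̃ − α̃ λ, −β̃], [1, 0]] ∈ ℝ²ˣ² has spectral radius ρ(B) = √β̃ = (√U − √L)/(√U + √L). -/
/-!
The eigenvalues of `B` are the roots of `z² − (1 + β̃ − α̃λ) z + β̃`. For `λ ∈ [L, U]` its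
discriminant `(1 + β̃ − α̃λ)² − 4β̃ = −16 (λ − L)(U − λ) / (√U + √L)⁴` is nonpositive, so the two
roots are `(t ± i √(4β̃ − t²)) / 2` with `t = 1 + β̃ − α̃λ`, and both have modulus `√β̃`.
-/

open Complex

theorem Matrix.mem_spectrum_fin_two_iff {K : Type*} [Field K] (a b c d z : K) :
    z ∈ spectrum K !![a, b; c, d] ↔ (z - a) * (z - d) - b * c = 0 := by
  rw [spectrum.mem_iff, Matrix.isUnit_iff_isUnit_det, isUnit_iff_ne_zero, not_not,
    Matrix.algebraMap_eq_diagonal]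
  have : Matrix.diagonal (algebraMap K (Fin 2 → K) z) - !![a, b; c, d]
      = !![z - a, -b; -c, z - d] := by
    ext i j
    fin_cases i <;> fin_cases j <;> simp [Matrix.diagonal]
  rw [this, Matrix.det_fin_two_of]
  constructor <;> intro h <;> linear_combination h

theorem Complex.norm_image_setOf_quadratic_eq_zero_of_sq_le {t β : ℝ} (h : t ^ 2 ≤ 4 * β) :
    (fun z : ℂ => ‖z‖) '' {z : ℂ | z * z - t * z + β = 0} = {√β} := by
  set y := √(4 * β - t ^ 2)
  have hy : y ^ 2 = 4 * β - t ^ 2 := Real.sq_sqrt (by linarith)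
  have hdiscrim : discrim (1 : ℂ) (-t) β = (y * I) * (y * I) := by
    rw [discrim]
    have hyC : (y : ℂ) ^ 2 = 4 * β - t ^ 2 := by exact_mod_cast congrArg ofReal hy
    linear_combination hyC - (y : ℂ) ^ 2 * I_sq
  have hroots (z : ℂ) :
      z * z - t * z + β = 0 ↔ z = (t + y * I) / 2 ∨ z = (t - y * I) / 2 := by
    rw [show z * z - t * z + β = 1 * (z * z) + (-t) * z + β by ring,
      quadratic_eq_zero_iff one_ne_zero hdiscrim, neg_neg, mul_one]
  have hnorm (u : ℝ) (hu : u ^ 2 = y ^ 2) : ‖((t + u * I) / 2 : ℂ)‖ = √β := by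
    rw [show ((t + u * I) / 2 : ℂ) = ((t / 2 : ℝ) + (u / 2 : ℝ) * I) by push_cast; ring,
      norm_add_mul_I]
    congr 1
    linear_combination (1 / 4 : ℝ) * hu + (1 / 4 : ℝ) * hy
  refine Set.eq_singleton_iff_unique_mem.mpr ⟨⟨_, (hroots _).mpr (Or.inl rfl), hnorm y rfl⟩, ?_⟩
  rintro _ ⟨z, hz, rfl⟩
  rcases (hroots z).mp hz with rfl | rfl
  · exact hnorm y rfl
  · simpa [sub_eq_add_neg] using hnorm (-y) (by ring)

theorem heavyBall_discrim_nonpos {r s lam : ℝ} (hrs : s + r ≠ 0) (hr : r ^ 2 ≤ lam)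
    (hs : lam ≤ s ^ 2) :
    (1 + ((s - r) / (s + r)) ^ 2 - 4 / (s + r) ^ 2 * lam) ^ 2 ≤ 4 * ((s - r) / (s + r)) ^ 2 := by
  have key : (1 + ((s - r) / (s + r)) ^ 2 - 4 / (s + r) ^ 2 * lam) ^ 2 - 4 * ((s - r) / (s + r)) ^ 2
      = -16 * ((lam - r ^ 2) * (s ^ 2 - lam) / (s + r) ^ 4) := by
    field_simp; ring
  have : 0 ≤ (lam - r ^ 2) * (s ^ 2 - lam) / (s + r) ^ 4 :=
    div_nonneg (mul_nonneg (by linarith) (by linarith)) (by positivity)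
  linarith

theorem heavyBall_block_spectral_radius_general (L U : ℝ) (hL : 0 < L)
    (αt βt : ℝ)
    (hαt : αt = 4 / (Real.sqrt U + Real.sqrt L) ^ 2)
    (hβt : βt = ((Real.sqrt U - Real.sqrt L) / (Real.sqrt U + Real.sqrt L)) ^ 2)
    (lam : ℝ) (hlam : lam ∈ Set.Icc L U)
    (B : Matrix (Fin 2) (Fin 2) ℝ) (hB : B = !![1 + βt - αt * lam, -βt; 1, 0]) :
    IsGreatest ((fun z : ℂ => ‖z‖) '' spectrum ℂ (B.map (Complex.ofReal : ℝ → ℂ)))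
        (Real.sqrt βt) ∧
      Real.sqrt βt = (Real.sqrt U - Real.sqrt L) / (Real.sqrt U + Real.sqrt L) := by
  obtain ⟨hLlam, hlamU⟩ := hlam
  have hsum : 0 < √U + √L := add_pos_of_nonneg_of_pos (Real.sqrt_nonneg U) (Real.sqrt_pos.2 hL)
  have hdiscrim : (1 + βt - αt * lam) ^ 2 ≤ 4 * βt := by
    rw [hαt, hβt]
    refine heavyBall_discrim_nonpos hsum.ne' ?_ ?_
    · rwa [Real.sq_sqrt hL.le]
    · rwa [Real.sq_sqrt (by linarith)]
  have hspectrum : spectrum ℂ (B.map ofReal) =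
      {z : ℂ | z * z - (1 + βt - αt * lam : ℝ) * z + βt = 0} := by
    ext z
    rw [Matrix.eta_fin_two (B.map ofReal), Matrix.mem_spectrum_fin_two_iff]
    simp [hB, sub_mul]
  refine ⟨?_, ?_⟩
  · rw [hspectrum, Complex.norm_image_setOf_quadratic_eq_zero_of_sq_le hdiscrim]
    exact isGreatest_singleton
  · rw [hβt, Real.sqrt_sq (div_nonneg ?_ hsum.le)]
    exact sub_nonneg.2 (Real.sqrt_le_sqrt (hLlam.trans hlamU))

/-- For `0 < L ≤ U`, heavy-ball parameters `α̃ = 4/(√U+√L)²`,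
`β̃ = ((√U−√L)/(√U+√L))²`, and any `λ ∈ [L, U]`, the matrix
`B = [[1 + β̃ − α̃λ, −β̃], [1, 0]]` has spectral radius `ρ(B) = √β̃ = (√U−√L)/(√U+√L)`. -/
theorem heavyBall_block_spectral_radius (L U : ℝ) (hL : 0 < L) (hLU : L ≤ U)
    (αt βt : ℝ)
    (hαt : αt = 4 / (Real.sqrt U + Real.sqrt L) ^ 2)
    (hβt : βt = ((Real.sqrt U - Real.sqrt L) / (Real.sqrt U + Real.sqrt L)) ^ 2)
    (lam : ℝ) (hlam : lam ∈ Set.Icc L U)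
    (B : Matrix (Fin 2) (Fin 2) ℝ) (hB : B = !![1 + βt - αt * lam, -βt; 1, 0]) :
    IsGreatest ((fun z : ℂ => ‖z‖) '' spectrum ℂ (B.map (Complex.ofReal : ℝ → ℂ)))
        (Real.sqrt βt) ∧
      Real.sqrt βt = (Real.sqrt U - Real.sqrt L) / (Real.sqrt U + Real.sqrt L) :=
  heavyBall_block_spectral_radius_general L U hL αt βt hαt hβt lam hlam B hB
end

section
/- Let 0 < L < U with κ := U/L > 1, and define α̃ := 4/(√U + √L)², β̃ := ((√U − √L)/(√U + √L))², and c̃ := 2 + 2β̃ + α̃. Then for every real λ ∈ [L, U] and every k ∈ ℕ, the matrix B := [[1 + β̃ − α̃ λ, −β̃], [1, 0]] ∈ ℝ²ˣ² satisfies ‖Bᵏ‖ ≤ ((√κ − 1)/(√κ + 1))ᵏ · (1 + k c̃ (√κ + 1)/(√κ − 1)), where ‖·‖ denotes the spectral norm (operator norm induced by the Euclidean norm). -/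
/-!
Write `r = (√κ - 1)/(√κ + 1)`. Then `β̃ = r²` and `τ := 1 + β̃ - α̃λ` satisfies `|τ| ≤ 2r`, so `B`
is the companion matrix of `x² - τx + r²`, whose roots `a, ā` have modulus `r`. The entries of
`Bⁿ⁺¹` are, up to the factor `-r²`, consecutive terms of the Lucas sequence `Uₙ(τ, r²)`, and
`Uₙ₊₁ - a Uₙ = āⁿ` gives `r |Uₙ| ≤ n rⁿ`. Bounding the spectral norm by the sum of the absolute
values of the entries yields `‖Bᵏ‖ ≤ rᵏ + k rᵏ⁻¹ (1 + r)²`, and `(1 + r)² ≤ c̃`.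
-/

open Matrix Real

def lucasU {R : Type*} [CommRing R] (P Q : R) : ℕ → R
  | 0 => 0
  | 1 => 1
  | n + 2 => P * lucasU P Q (n + 1) - Q * lucasU P Q n

namespace lucasU

variable {R S : Type*} [CommRing R] [CommRing S]

@[simp] lemma zero (P Q : R) : lucasU P Q 0 = 0 := rfl
@[simp] lemma one (P Q : R) : lucasU P Q 1 = 1 := rfl
lemma add_two (P Q : R) (n : ℕ) :
    lucasU P Q (n + 2) = P * lucasU P Q (n + 1) - Q * lucasU P Q n := rfl

lemma map (f : R →+* S) (P Q : R) (n : ℕ) : f (lucasU P Q n) = lucasU (f P) (f Q) n := by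
  induction n using Nat.twoStepInduction with
  | zero => simp
  | one => simp
  | more n ih₀ ih₁ => simp [add_two, ih₀, ih₁]

lemma succ_sub_mul (a b : R) (n : ℕ) :
    lucasU (a + b) (a * b) (n + 1) - a * lucasU (a + b) (a * b) n = b ^ n := by
  induction n with
  | zero => simp
  | succ n ih => rw [add_two, pow_succ, ← ih]; ring

lemma mul_norm_le {K : Type*} [NormedCommRing K] [NormOneClass K] {a b : K} {r : ℝ}
    (ha : ‖a‖ ≤ r) (hb : ‖b‖ ≤ r) (n : ℕ) :
    r * ‖lucasU (a + b) (a * b) n‖ ≤ n * r ^ n := by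
  have hr : 0 ≤ r := (norm_nonneg a).trans ha
  induction n with
  | zero => simp
  | succ n ih =>
    rw [← sub_add_cancel (lucasU (a + b) (a * b) (n + 1)) (a * lucasU (a + b) (a * b) n),
      succ_sub_mul]
    calc r * ‖b ^ n + a * lucasU (a + b) (a * b) n‖
        ≤ r * (r ^ n + r * ‖lucasU (a + b) (a * b) n‖) := by
          gcongr
          refine (norm_add_le _ _).trans (add_le_add ?_ ?_)
          · exact (norm_pow_le b _).trans (pow_le_pow_left₀ (norm_nonneg b) hb _)
          · exact (norm_mul_le _ _).trans (mul_le_mul_of_nonneg_right ha (norm_nonneg _))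
      _ ≤ r * (r ^ n + n * r ^ n) := by gcongr
      _ = ↑(n + 1) * r ^ (n + 1) := by push_cast; ring

end lucasU

open ComplexConjugate in
lemma Complex.exists_add_conj_eq_of_abs_le {τ r : ℝ} (h : |τ| ≤ 2 * r) :
    ∃ a : ℂ, a + conj a = τ ∧ a * conj a = (r : ℂ) ^ 2 ∧ ‖a‖ = r := by
  have hr : 0 ≤ r := by linarith [abs_nonneg τ]
  have hd : 0 ≤ r ^ 2 - (τ / 2) ^ 2 := by nlinarith [sq_abs τ, abs_nonneg τ]
  have hnormSq : Complex.normSq ⟨τ / 2, √(r ^ 2 - (τ / 2) ^ 2)⟩ = r ^ 2 := by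
    rw [Complex.normSq_mk, ← sq, ← sq, Real.sq_sqrt hd]; ring
  refine ⟨⟨τ / 2, √(r ^ 2 - (τ / 2) ^ 2)⟩, ?_, ?_, ?_⟩
  · rw [Complex.add_conj]; push_cast; ring
  · rw [Complex.mul_conj, hnormSq]; push_cast; ring
  · rw [Complex.norm_def, hnormSq, Real.sqrt_sq hr]

lemma mul_abs_lucasU_sq_le {τ r : ℝ} (h : |τ| ≤ 2 * r) (n : ℕ) :
    r * |lucasU τ (r ^ 2) n| ≤ n * r ^ n := by
  obtain ⟨a, hsum, hprod, hnorm⟩ := Complex.exists_add_conj_eq_of_abs_le h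
  have := lucasU.mul_norm_le hnorm.le ((Complex.norm_conj a).trans hnorm).le n
  rwa [hsum, hprod, ← Complex.ofReal_pow, ← Complex.ofRealHom_eq_coe, ← Complex.ofRealHom_eq_coe,
    ← lucasU.map, Complex.ofRealHom_eq_coe, Complex.norm_real, Real.norm_eq_abs] at this

lemma companion_pow_succ {R : Type*} [CommRing R] (P Q : R) (n : ℕ) :
    !![P, -Q; 1, 0] ^ (n + 1) =
      !![lucasU P Q (n + 2), -Q * lucasU P Q (n + 1); lucasU P Q (n + 1), -Q * lucasU P Q n] := by
  induction n with
  | zero => simp [lucasU]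
  | succ n ih =>
    rw [pow_succ, ih, mul_fin_two, lucasU.add_two P Q (n + 1), lucasU.add_two P Q n]
    ring_nf

lemma EuclideanSpace.norm_le_sum_norm {𝕜 ι : Type*} [RCLike 𝕜] [Fintype ι]
    (x : EuclideanSpace 𝕜 ι) : ‖x‖ ≤ ∑ i, ‖x i‖ := by
  rw [EuclideanSpace.norm_eq, Real.sqrt_le_left (by positivity)]
  exact Finset.sum_sq_le_sq_sum_of_nonneg fun _ _ ↦ norm_nonneg _

lemma Matrix.norm_toEuclideanCLM_le_sum_norm {𝕜 n : Type*} [RCLike 𝕜] [Fintype n]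
    [DecidableEq n] (M : Matrix n n 𝕜) :
    ‖toEuclideanCLM (𝕜 := 𝕜) M‖ ≤ ∑ i, ∑ j, ‖M i j‖ := by
  refine ContinuousLinearMap.opNorm_le_bound _ (by positivity) fun x ↦ ?_
  calc ‖toEuclideanCLM (𝕜 := 𝕜) M x‖ ≤ ∑ i, ‖(M *ᵥ x.ofLp) i‖ :=
        (EuclideanSpace.norm_le_sum_norm _).trans_eq (by rw [ofLp_toEuclideanCLM])
    _ ≤ ∑ i, ∑ j, ‖M i j‖ * ‖x‖ := by
        gcongr with i
        refine (norm_sum_le _ _).trans (Finset.sum_le_sum fun j _ ↦ ?_)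
        rw [norm_mul]
        gcongr
        exact PiLp.norm_apply_le x j
    _ = (∑ i, ∑ j, ‖M i j‖) * ‖x‖ := by simp only [Finset.sum_mul]

lemma norm_toEuclideanCLM_companion_pow_le {τ r : ℝ} (hr : 0 < r) (h : |τ| ≤ 2 * r) (k : ℕ) :
    ‖toEuclideanCLM (𝕜 := ℝ) (!![τ, -r ^ 2; 1, 0] ^ k)‖ ≤ r ^ k * (1 + k * (1 + r) ^ 2 / r) := by
  rcases k with _ | n
  · simp
  set u := lucasU τ (r ^ 2)
  have hu := mul_abs_lucasU_sq_le h
  have hentries : ‖toEuclideanCLM (𝕜 := ℝ) (!![τ, -r ^ 2; 1, 0] ^ (n + 1))‖ ≤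
      |u (n + 2)| + r ^ 2 * |u (n + 1)| + (|u (n + 1)| + r ^ 2 * |u n|) := by
    have := norm_toEuclideanCLM_le_sum_norm (!![τ, -r ^ 2; 1, 0] ^ (n + 1))
    simp only [companion_pow_succ] at this ⊢
    simpa [Fin.sum_univ_two, abs_mul] using this
  refine le_of_mul_le_mul_left ?_ hr
  calc r * ‖toEuclideanCLM (𝕜 := ℝ) (!![τ, -r ^ 2; 1, 0] ^ (n + 1))‖
      ≤ r * |u (n + 2)| + r ^ 2 * (r * |u (n + 1)|) + (r * |u (n + 1)| + r ^ 2 * (r * |u n|)) :=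
        (mul_le_mul_of_nonneg_left hentries hr.le).trans_eq (by ring)
    _ ≤ (n + 2 : ℕ) * r ^ (n + 2) + r ^ 2 * ((n + 1 : ℕ) * r ^ (n + 1)) +
        ((n + 1 : ℕ) * r ^ (n + 1) + r ^ 2 * (n * r ^ n)) := by
        gcongr ?_ + r ^ 2 * ?_ + (?_ + r ^ 2 * ?_) <;> apply hu
    _ = r ^ (n + 1) * ((n + 1 : ℕ) * (1 + r) ^ 2) := by push_cast; ring
    _ ≤ r * (r ^ (n + 1) * (1 + (n + 1 : ℕ) * (1 + r) ^ 2 / r)) := by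
        field_simp
        linarith

lemma abs_one_add_sq_sub_mul_le {a b lam : ℝ} (hab : 0 < a + b) (hb : b ^ 2 ≤ lam)
    (ha : lam ≤ a ^ 2) :
    |1 + ((a - b) / (a + b)) ^ 2 - 4 / (a + b) ^ 2 * lam| ≤ 2 * ((a - b) / (a + b)) := by
  have hlhs : 1 + ((a - b) / (a + b)) ^ 2 - 4 / (a + b) ^ 2 * lam =
      (2 * (a ^ 2 + b ^ 2) - 4 * lam) / (a + b) ^ 2 := by
    field_simp; ring
  have hrhs : 2 * ((a - b) / (a + b)) = 2 * (a ^ 2 - b ^ 2) / (a + b) ^ 2 := by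
    field_simp; ring
  rw [hlhs, hrhs, abs_div, abs_of_pos (by positivity : 0 < (a + b) ^ 2)]
  gcongr
  rw [abs_le]
  constructor <;> linarith

/-- For `0 < L < U`, `κ = U/L`, heavy-ball parameters
`α̃ = 4/(√U+√L)²`, `β̃ = ((√U−√L)/(√U+√L))²`, `c̃ = 2 + 2β̃ + α̃`, any `λ ∈ [L, U]`
and any `k ∈ ℕ`, the matrix `B = [[1 + β̃ − α̃λ, −β̃], [1, 0]]` satisfies
`‖Bᵏ‖ ≤ ((√κ−1)/(√κ+1))ᵏ (1 + k c̃ (√κ+1)/(√κ−1))` in the spectral norm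
(operator norm induced by the Euclidean norm). -/
theorem heavyBall_block_power_norm_bound (L U : ℝ) (hL : 0 < L) (hLU : L < U)
    (κ : ℝ) (hκ : κ = U / L)
    (αt βt ct : ℝ)
    (hαt : αt = 4 / (Real.sqrt U + Real.sqrt L) ^ 2)
    (hβt : βt = ((Real.sqrt U - Real.sqrt L) / (Real.sqrt U + Real.sqrt L)) ^ 2)
    (hct : ct = 2 + 2 * βt + αt)
    (lam : ℝ) (hlam : lam ∈ Set.Icc L U)
    (B : Matrix (Fin 2) (Fin 2) ℝ) (hB : B = !![1 + βt - αt * lam, -βt; 1, 0])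
    (k : ℕ) :
    ‖Matrix.toEuclideanCLM (𝕜 := ℝ) (B ^ k)‖ ≤
      ((Real.sqrt κ - 1) / (Real.sqrt κ + 1)) ^ k *
        (1 + k * ct * (Real.sqrt κ + 1) / (Real.sqrt κ - 1)) := by
  obtain ⟨hLlam, hlamU⟩ := hlam
  have hU : 0 < U := hL.trans hLU
  have hsL : 0 < √L := Real.sqrt_pos.2 hL
  have hsLU : √L < √U := Real.sqrt_lt_sqrt hL.le hLU
  set r := (√U - √L) / (√U + √L) with hr_def
  have hr : 0 < r := div_pos (by linarith) (by linarith)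
  have hrκ : (√κ - 1) / (√κ + 1) = r := by
    rw [hκ, Real.sqrt_div hU.le, hr_def]
    field_simp
  have hrκ_inv : (√κ + 1) / (√κ - 1) = r⁻¹ := by rw [← hrκ, inv_div]
  have hτ : |1 + r ^ 2 - αt * lam| ≤ 2 * r := by
    rw [hαt]
    exact abs_one_add_sq_sub_mul_le (by linarith) (by rwa [sq_sqrt hL.le])
      (by rwa [sq_sqrt hU.le])
  have hct_ge : (1 + r) ^ 2 ≤ ct := by
    have hα : 0 < αt := by rw [hαt]; positivity
    rw [hct, hβt]
    nlinarith [sq_nonneg (1 - r)]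
  rw [hB, hβt, hrκ, mul_div_assoc, hrκ_inv]
  calc _ ≤ r ^ k * (1 + k * (1 + r) ^ 2 / r) :=
        norm_toEuclideanCLM_companion_pow_le hr hτ k
    _ ≤ r ^ k * (1 + k * ct * r⁻¹) := by
        rw [div_eq_mul_inv]
        gcongr
end
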